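/- arXiv:1510.03888 — 3 statements merged into one kernel-verified Lean document; each statement's English description precedes it below -/
import Mathlib

section
/- With notation as above (U = (1/R)[[z,−w̄],[w,z̄]] unitary, z₀ = R(1−ε²)e^{−iφ/2}, ε ∈ (0,1)), the condition ρ(R_z(φ), U) ≤ ε, where ρ(A,B) = √(1 − |tr(AB†)|/2), holds if and only if Re((z−z₀)e^{iφ/2}) ≥ 0 or Re((z+z₀)e^{iφ/2}) ≤ 0. -/
open Matrix Complex

noncomputable section

/-- The global-phase-insensitive distance `ρ(A,B) = √(1 − |tr(AB†)|/2)`. -/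
def rhoDist (A B : Matrix (Fin 2) (Fin 2) ℂ) : ℝ :=
  Real.sqrt (1 - ‖(A * Bᴴ).trace‖ / 2)

/-- The rotation `R_z(φ) = diag(e^{−iφ/2}, e^{iφ/2})`. -/
def Rz (φ : ℝ) : Matrix (Fin 2) (Fin 2) ℂ :=
  !![Complex.exp (-(φ / 2 : ℝ) * Complex.I), 0; 0, Complex.exp ((φ / 2 : ℝ) * Complex.I)]

/-!
With `ζ = z e^{iφ/2}` the trace `tr(R_z(φ) U†)` is `(ζ̄ + ζ)/R = 2 Re ζ / R`, so `ρ ≤ ε` says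
`|Re ζ| ≥ R(1 − ε²)`. Since `z₀ e^{iφ/2} = R(1 − ε²)` is real, the two signs of `Re ζ` give the
two half-planes.
-/

lemma exp_neg_mul_I_eq_conj (θ : ℝ) :
    Complex.exp (-(θ : ℂ) * I) = starRingEnd ℂ (Complex.exp (θ * I)) := by
  rw [← Complex.exp_conj, map_mul, Complex.conj_ofReal, Complex.conj_I, neg_mul, mul_neg]

lemma trace_Rz_mul_conjTranspose_smul (R φ : ℝ) (z w : ℂ) :
    (Rz φ * ((R : ℂ)⁻¹ • !![z, -starRingEnd ℂ w; w, starRingEnd ℂ z])ᴴ).trace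
      = ((2 * (z * Complex.exp ((φ / 2 : ℝ) * I)).re / R : ℝ) : ℂ) := by
  have htrace : (Rz φ * ((R : ℂ)⁻¹ • !![z, -starRingEnd ℂ w; w, starRingEnd ℂ z])ᴴ).trace
      = (R : ℂ)⁻¹ * (starRingEnd ℂ (z * Complex.exp ((φ / 2 : ℝ) * I))
          + z * Complex.exp ((φ / 2 : ℝ) * I)) := by
    rw [Rz, exp_neg_mul_I_eq_conj, trace_fin_two]
    generalize Complex.exp ((φ / 2 : ℝ) * I) = e
    simp [mul_apply, Fin.sum_univ_two]
    ring
  rw [htrace, add_comm, Complex.add_conj]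
  push_cast
  ring

lemma rhoDist_Rz_smul (R φ : ℝ) (hR : 0 < R) (z w : ℂ) :
    rhoDist (Rz φ) ((R : ℂ)⁻¹ • !![z, -starRingEnd ℂ w; w, starRingEnd ℂ z])
      = Real.sqrt (1 - |(z * Complex.exp ((φ / 2 : ℝ) * I)).re| / R) := by
  rw [rhoDist, trace_Rz_mul_conjTranspose_smul, Complex.norm_real, Real.norm_eq_abs,
    abs_div, abs_mul, abs_two, abs_of_pos hR]
  ring_nf

lemma sqrt_one_sub_abs_div_le_iff {r ε : ℝ} (hr : 0 < r) (hε : 0 < ε) (x : ℝ) :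
    Real.sqrt (1 - |x| / r) ≤ ε ↔ r * (1 - ε ^ 2) ≤ x ∨ x ≤ -(r * (1 - ε ^ 2)) := by
  rw [Real.sqrt_le_left hε.le, sub_le_comm, le_div_iff₀ hr, mul_comm, le_abs, le_neg]

theorem stmt6_general (R φ ε : ℝ) (hR : 0 < R) (hε : ε ∈ Set.Ioo (0 : ℝ) 1)
    (z w : ℂ)
    (U : Matrix (Fin 2) (Fin 2) ℂ)
    (hU : U = ((R : ℂ))⁻¹ • !![z, -(starRingEnd ℂ) w; w, (starRingEnd ℂ) z])
    (z₀ : ℂ) (hz₀ : z₀ = (R : ℂ) * (1 - (ε : ℂ) ^ 2) * Complex.exp (-(φ / 2 : ℝ) * Complex.I)) :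
    rhoDist (Rz φ) U ≤ ε ↔
      0 ≤ ((z - z₀) * Complex.exp ((φ / 2 : ℝ) * Complex.I)).re
        ∨ ((z + z₀) * Complex.exp ((φ / 2 : ℝ) * Complex.I)).re ≤ 0 := by
  set e := Complex.exp ((φ / 2 : ℝ) * I)
  have hz₀e : z₀ * e = ((R * (1 - ε ^ 2) : ℝ) : ℂ) := by
    rw [hz₀, mul_assoc, ← Complex.exp_add, neg_mul, neg_add_cancel, Complex.exp_zero, mul_one]
    push_cast
    ring
  rw [hU, rhoDist_Rz_smul R φ hR, sqrt_one_sub_abs_div_le_iff hR hε.1, sub_mul, add_mul, hz₀e,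
    Complex.sub_re, Complex.add_re, Complex.ofReal_re, sub_nonneg, ← le_neg_iff_add_nonpos_right]

/-- with `U = (1/R)[[z,−w̄],[w,z̄]]`, `z₀ = R(1−ε²)e^{−iφ/2}`, `ε ∈ (0,1)`,
we have `ρ(R_z(φ),U) ≤ ε ↔ Re((z−z₀)e^{iφ/2}) ≥ 0 ∨ Re((z+z₀)e^{iφ/2}) ≤ 0`. -/
theorem stmt6 (R φ ε : ℝ) (hR : 0 < R) (hε : ε ∈ Set.Ioo (0 : ℝ) 1)
    (z w : ℂ) (hzw : ‖z‖ ^ 2 + ‖w‖ ^ 2 = R ^ 2)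
    (U : Matrix (Fin 2) (Fin 2) ℂ)
    (hU : U = ((R : ℂ))⁻¹ • !![z, -(starRingEnd ℂ) w; w, (starRingEnd ℂ) z])
    (z₀ : ℂ) (hz₀ : z₀ = (R : ℂ) * (1 - (ε : ℂ) ^ 2) * Complex.exp (-(φ / 2 : ℝ) * Complex.I)) :
    rhoDist (Rz φ) U ≤ ε ↔
      0 ≤ ((z - z₀) * Complex.exp ((φ / 2 : ℝ) * Complex.I)).re
        ∨ ((z + z₀) * Complex.exp ((φ / 2 : ℝ) * Complex.I)).re ≤ 0 :=
  stmt6_general R φ ε hR hε z w U hU z₀ hz₀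
end
end

section
/- Let K be a CM field of degree 2d over ℚ and let I = ξ·O_K be a nonzero principal ideal of O_K. Suppose v ∈ I is a nonzero element whose Euclidean length under the Minkowski embedding satisfies ‖v‖ ≤ (4/3)^{(2d−1)/4}·vol(I)^{1/(2d)} (e.g. the first vector of an LLL-reduced basis of I). Write v = η·ξ with η ∈ O_K. Then N_{K/ℚ}(η) ≤ ((1/(2d))·(4/3)^{(2d−1)/2})^d · vol(O_K). In particular the cofactor norm is bounded by a constant C_K depending only on K. -/
open scoped NumberField
open Finset

/-!
Taking norms in `v = η ξ` gives `N(v) = N(η) N(ξ)`, and `vol(I) = N(ξ) vol(O_K)`. By AM-GM,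
`N(v) = ∏ |σᵢ v|² ≤ (‖v‖² / (2d))ᵈ`, which the shortness of `v` bounds by `Cᵈ vol(I)`;
dividing by `N(ξ) > 0` leaves `N(η) ≤ Cᵈ vol(O_K)`.
-/

lemma Real.prod_le_mean_pow_card {ι : Type*} {s : Finset ι} (hs : s.Nonempty) {z : ι → ℝ}
    (hz : ∀ i ∈ s, 0 ≤ z i) : ∏ i ∈ s, z i ≤ ((∑ i ∈ s, z i) / #s) ^ #s := by
  have hcard : (0 : ℝ) < #s := by exact_mod_cast hs.card_pos
  have hprod : 0 ≤ ∏ i ∈ s, z i := prod_nonneg hz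
  have amgm := Real.geom_mean_le_arith_mean s (fun _ => 1) z (fun _ _ => zero_le_one)
    (by simpa using hcard) hz
  simp only [Real.rpow_one, sum_const, nsmul_eq_mul, mul_one, one_mul] at amgm
  calc ∏ i ∈ s, z i = ((∏ i ∈ s, z i) ^ (#s : ℝ)⁻¹) ^ #s := by
        rw [← Real.rpow_natCast, ← Real.rpow_mul hprod, inv_mul_cancel₀ hcard.ne', Real.rpow_one]
    _ ≤ ((∑ i ∈ s, z i) / #s) ^ #s := pow_le_pow_left₀ (by positivity) amgm _

lemma prod_le_of_sqrt_two_mul_sum_le {ι : Type*} [Fintype ι] [Nonempty ι] {x : ι → ℝ}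
    {a V : ℝ} (hx : ∀ i, 0 ≤ x i) (h : √(2 * ∑ i, x i) ≤ a * V ^ (1 / (2 * Fintype.card ι : ℝ)))
    (ha : 0 ≤ a) (hV : 0 ≤ V) :
    ∏ i, x i ≤ (a ^ 2 / (2 * Fintype.card ι)) ^ Fintype.card ι * V := by
  set n := Fintype.card ι
  set w := V ^ (1 / (2 * n : ℝ))
  have hn : (0 : ℝ) < n := by exact_mod_cast Fintype.card_pos
  have hsq : 2 * ∑ i, x i ≤ (a * w) ^ 2 := (Real.sqrt_le_left (by positivity)).mp h
  have hw : w ^ (2 * n) = V := by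
    rw [← Real.rpow_natCast, ← Real.rpow_mul hV, Nat.cast_mul, Nat.cast_two,
      one_div_mul_cancel (by positivity), Real.rpow_one]
  calc ∏ i, x i ≤ ((∑ i, x i) / n) ^ n :=
        Real.prod_le_mean_pow_card univ_nonempty fun i _ => hx i
    _ ≤ (a ^ 2 / (2 * n) * w ^ 2) ^ n := by
        gcongr
        · exact div_nonneg (sum_nonneg fun i _ => hx i) hn.le
        · rw [div_le_iff₀ hn]; field_simp; linarith
    _ = (a ^ 2 / (2 * n)) ^ n * V := by rw [mul_pow, ← pow_mul, hw]

theorem stmt10_general (K : Type*) [Field K] (d : ℕ) (hd : 0 < d)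
    (σ : Fin d → (K →+* ℂ))
    (ξ η v : 𝓞 K) (hξ : ξ ≠ 0) (hv : v = η * ξ)
    (volOK volI : ℝ) (hvolOK : 0 < volOK)
    (hvolI : volI = (∏ i, Complex.normSq (σ i (algebraMap (𝓞 K) K ξ))) * volOK)
    (hshort : Real.sqrt (2 * ∑ i, Complex.normSq (σ i (algebraMap (𝓞 K) K v)))
        ≤ (4 / 3 : ℝ) ^ (((2 * d : ℝ) - 1) / 4) * volI ^ ((1 : ℝ) / (2 * d))) :
    ∏ i, Complex.normSq (σ i (algebraMap (𝓞 K) K η))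
      ≤ ((1 / (2 * d : ℝ)) * (4 / 3 : ℝ) ^ (((2 * d : ℝ) - 1) / 2)) ^ d * volOK := by
  have : Nonempty (Fin d) := ⟨⟨0, hd⟩⟩
  have hξ_pos : 0 < ∏ i, Complex.normSq (σ i (algebraMap (𝓞 K) K ξ)) :=
    prod_pos fun i _ => Complex.normSq_pos.mpr (by simpa using hξ)
  have hv_norm : ∏ i, Complex.normSq (σ i (algebraMap (𝓞 K) K v)) =
      (∏ i, Complex.normSq (σ i (algebraMap (𝓞 K) K η))) *
        ∏ i, Complex.normSq (σ i (algebraMap (𝓞 K) K ξ)) := by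
    simp [hv, Complex.normSq_mul, prod_mul_distrib]
  have hconst : ((4 / 3 : ℝ) ^ (((2 * d : ℝ) - 1) / 4)) ^ 2 / (2 * d) =
      1 / (2 * d : ℝ) * (4 / 3 : ℝ) ^ (((2 * d : ℝ) - 1) / 2) := by
    rw [← Real.rpow_natCast, ← Real.rpow_mul (by norm_num)]
    ring_nf
  have hvolI_nonneg : 0 ≤ volI := hvolI ▸ by positivity
  have key := prod_le_of_sqrt_two_mul_sum_le (fun i => Complex.normSq_nonneg _)
    (by rwa [Fintype.card_fin]) (by positivity) hvolI_nonneg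
  rw [Fintype.card_fin, hconst, hv_norm, hvolI, ← mul_assoc, mul_right_comm _ _ volOK] at key
  exact le_of_mul_le_mul_right key hξ_pos

/-- let `K` be a CM field of degree `2d`, `I = ξ·O_K` a nonzero principal
ideal, and let `v = η·ξ ∈ I` be a nonzero element whose Euclidean length
`‖v‖ = √(Tr_{K/ℚ}(v v*)) = √(2∑_i |σ_i(v)|²)` satisfies
`‖v‖ ≤ (4/3)^{(2d−1)/4}·vol(I)^{1/(2d)}` (e.g. the first LLL-basis vector of `I`),
where `vol(I) = N_{K/ℚ}(ξ)·vol(O_K)`.  Then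
`N_{K/ℚ}(η) ≤ ((1/(2d))·(4/3)^{(2d−1)/2})^d · vol(O_K)`, a constant depending only on `K`. -/
theorem stmt10 (K : Type*) [Field K] [NumberField K] (d : ℕ) (hd : 0 < d)
    (hdeg : Module.finrank ℚ K = 2 * d)
    (σ : Fin d → (K →+* ℂ)) (hσ : Function.Injective σ)
    (hconj : ∀ i j, (starRingEnd ℂ).comp (σ i : K →+* ℂ) ≠ σ j)
    (ξ η v : 𝓞 K) (hξ : ξ ≠ 0) (hv0 : v ≠ 0) (hv : v = η * ξ)
    (volOK volI : ℝ) (hvolOK : 0 < volOK)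
    (hvolI : volI = (∏ i, Complex.normSq (σ i (algebraMap (𝓞 K) K ξ))) * volOK)
    (hshort : Real.sqrt (2 * ∑ i, Complex.normSq (σ i (algebraMap (𝓞 K) K v)))
        ≤ (4 / 3 : ℝ) ^ (((2 * d : ℝ) - 1) / 4) * volI ^ ((1 : ℝ) / (2 * d))) :
    ∏ i, Complex.normSq (σ i (algebraMap (𝓞 K) K η))
      ≤ ((1 / (2 * d : ℝ)) * (4 / 3 : ℝ) ^ (((2 * d : ℝ) - 1) / 2)) ^ d * volOK :=
  stmt10_general K d hd σ ξ η v hξ hv volOK volI hvolOK hvolI hshort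
end

section
/- Let F be a totally real number field of degree d with embeddings σ₁,…,σ_d and fundamental units u₁,…,u_{d−1} of O_F. Fix δ₀ > 1 and define δ_k = δ₀·√(∏_{j=1}^{d−1} max(|σ_k(u_j)|, |σ_k(u_j)|⁻¹)) for k = 1,…,d. Then for every t ∈ ℝ^d with |∑_k t_k| < log δ₀ there exists a unit u ∈ O_F^× such that |log|σ_k(u)| − t_k| ≤ log δ_k for all k = 1,…,d. -/
open scoped NumberField

open Module Submodule Set Function
open NumberField NumberField.InfinitePlace NumberField.Units NumberField.Units.dirichletUnitTheorem

/-!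
The vectors `ℓ(u_j) = (log |σ_k(u_j)|)_k` lie in the hyperplane `∑ x_k = 0` (the norm of a unit
is `±1`) and are linearly independent (Dirichlet), so they form a basis of that hyperplane.
Split `t = s + m • 1` with `m = (∑ t_k) / d` and `s` in the hyperplane, write `s = ∑ c_j ℓ(u_j)`
and round: `u = ∏ u_j ^ round c_j` satisfies
`|log |σ_k(u)| - t_k| ≤ ½ ∑_j |log |σ_k(u_j)|| + |m|`, which is at most `log δ_k` since
`log (max a a⁻¹) = |log a|` and `|m| ≤ |∑ t_k| < log δ₀`.
-/

theorem span_eq_ker_of_linearIndependent {K V ι : Type*} [Field K] [AddCommGroup V] [Module K V]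
    [FiniteDimensional K V] [Fintype ι] {f : Dual K V} (hf : f ≠ 0) {v : ι → V}
    (hv : LinearIndependent K v) (hvf : ∀ j, f (v j) = 0)
    (hcard : Fintype.card ι + 1 = finrank K V) :
    span K (range v) = LinearMap.ker f := by
  refine eq_of_le_of_finrank_eq (span_le.mpr ?_) ?_
  · rintro _ ⟨j, rfl⟩
    exact hvf j
  · have := Dual.finrank_ker_add_one_of_ne_zero hf
    rw [finrank_span_eq_card hv]
    omega

theorem sub_mean_mem_span {ι κ : Type*} [Fintype ι] [Fintype κ] {v : ι → κ → ℝ}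
    (hv : LinearIndependent ℝ v) (hsum : ∀ j, ∑ k, v j k = 0)
    (hcard : Fintype.card ι + 1 = Fintype.card κ) (t : κ → ℝ) :
    (t - fun _ => (∑ k, t k) / Fintype.card κ) ∈ span ℝ (range v) := by
  let f : Dual ℝ (κ → ℝ) := Fintype.linearCombination ℝ fun _ => 1
  have hf : ∀ x, f x = ∑ k, x k := fun x => by simp [f, Fintype.linearCombination_apply]
  have hκ : (Fintype.card κ : ℝ) ≠ 0 := by
    norm_cast
    omega
  rw [span_eq_ker_of_linearIndependent (f := f) ?_ hv (fun j => (hf _).trans (hsum j))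
    (by rwa [finrank_fintype_fun_eq_card]), LinearMap.mem_ker, hf]
  · simp [Finset.sum_sub_distrib, mul_div_cancel₀ _ hκ]
  · intro h
    have : Fintype.card κ = 0 := by simpa [hf] using congr($h fun _ => 1)
    omega

theorem exists_int_combination_near {ι κ : Type*} [Fintype ι] (v : ι → κ → ℝ) {s : κ → ℝ}
    (hs : s ∈ span ℝ (range v)) :
    ∃ n : ι → ℤ, ∀ k, |∑ j, (n j : ℝ) * v j k - s k| ≤ (∑ j, |v j k|) / 2 := by
  obtain ⟨c, rfl⟩ := (mem_span_range_iff_exists_fun ℝ).mp hs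
  refine ⟨fun j => round (c j), fun k => ?_⟩
  calc |∑ j, ((round (c j) : ℤ) : ℝ) * v j k - (∑ j, c j • v j) k|
      = |∑ j, (((round (c j) : ℤ) : ℝ) - c j) * v j k| := by
        simp [Finset.sum_apply, sub_mul, Finset.sum_sub_distrib]
    _ ≤ ∑ j, |((round (c j) : ℤ) : ℝ) - c j| * |v j k| := by
        simpa only [abs_mul] using
          Finset.abs_sum_le_sum_abs (fun j => (((round (c j) : ℤ) : ℝ) - c j) * v j k) _
    _ ≤ ∑ j, 1 / 2 * |v j k| := by
        gcongr with j
        rw [abs_sub_comm]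
        exact abs_sub_round (c j)
    _ = (∑ j, |v j k|) / 2 := by
        rw [← Finset.mul_sum]
        ring

theorem exists_int_combination_near_of_sum_eq_zero {ι κ : Type*} [Fintype ι] [Fintype κ]
    {v : ι → κ → ℝ} (hv : LinearIndependent ℝ v) (hsum : ∀ j, ∑ k, v j k = 0)
    (hcard : Fintype.card ι + 1 = Fintype.card κ) (t : κ → ℝ) :
    ∃ n : ι → ℤ, ∀ k,
      |∑ j, (n j : ℝ) * v j k - t k| ≤ (∑ j, |v j k|) / 2 + |∑ k, t k| / Fintype.card κ := by
  obtain ⟨n, hn⟩ := exists_int_combination_near v (sub_mean_mem_span hv hsum hcard t)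
  refine ⟨n, fun k => ?_⟩
  calc |∑ j, (n j : ℝ) * v j k - t k|
      = |(∑ j, (n j : ℝ) * v j k - (t k - (∑ k, t k) / Fintype.card κ))
          - (∑ k, t k) / Fintype.card κ| := by
        congr 1
        ring
    _ ≤ (∑ j, |v j k|) / 2 + |(∑ k, t k) / Fintype.card κ| :=
        (abs_sub _ _).trans (add_le_add (hn k) le_rfl)
    _ = _ := by rw [abs_div, Nat.abs_cast]

theorem Real.abs_log_eq_log_max_inv {a : ℝ} (ha : 0 < a) :
    |Real.log a| = Real.log (max a a⁻¹) := by
  rcases le_total 1 a with h | h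
  · rw [max_eq_left ((inv_le_one_of_one_le₀ h).trans h), abs_of_nonneg (Real.log_nonneg h)]
  · rw [max_eq_right (h.trans ((one_le_inv₀ ha).mpr h)), abs_of_nonpos (Real.log_nonpos ha.le h),
      Real.log_inv]

theorem Real.log_mul_sqrt_prod_max_inv {ι : Type*} [Fintype ι] {δ₀ : ℝ} (hδ₀ : 0 < δ₀)
    {a : ι → ℝ} (ha : ∀ j, 0 < a j) :
    Real.log (δ₀ * √(∏ j, max (a j) (a j)⁻¹)) = Real.log δ₀ + (∑ j, |Real.log (a j)|) / 2 := by
  have hmax : ∀ j, 0 < max (a j) (a j)⁻¹ := fun j => lt_max_of_lt_left (ha j)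
  have hprod : 0 < ∏ j, max (a j) (a j)⁻¹ := Finset.prod_pos fun j _ => hmax j
  rw [Real.log_mul hδ₀.ne' (Real.sqrt_pos.mpr hprod).ne', Real.log_sqrt hprod.le,
    Real.log_prod fun j _ => (hmax j).ne']
  simp only [Real.abs_log_eq_log_max_inv (ha _)]

section RealPlaces

variable {F : Type*} [Field F]

noncomputable def realPlace (φ : F →+* ℝ) : InfinitePlace F :=
  InfinitePlace.mk (Complex.ofRealHom.comp φ)

theorem realPlace_apply (φ : F →+* ℝ) (x : F) : realPlace φ x = |φ x| := by
  simp [realPlace, InfinitePlace.apply, Complex.norm_real]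

theorem isReal_ofRealHom_comp (φ : F →+* ℝ) :
    ComplexEmbedding.IsReal (Complex.ofRealHom.comp φ) := by
  ext x
  simp [Complex.conj_ofReal]

theorem isReal_realPlace (φ : F →+* ℝ) : IsReal (realPlace φ) :=
  isReal_mk_iff.mpr (isReal_ofRealHom_comp φ)

theorem realPlace_injective : Injective (realPlace (F := F)) := by
  intro φ ψ h
  have h' : Complex.ofRealHom.comp φ = Complex.ofRealHom.comp ψ := by
    rcases mk_eq_iff.mp h with h | h
    · exact h
    · rwa [ComplexEmbedding.isReal_iff.mp (isReal_ofRealHom_comp φ)] at h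
  ext x
  exact Complex.ofReal_injective (RingHom.congr_fun h' x)

theorem bijective_realPlace_comp [NumberField F] {κ : Type*} [Fintype κ] {σ : κ → (F →+* ℝ)}
    (hσ : Injective σ) (hdeg : finrank ℚ F = Fintype.card κ) : Bijective (realPlace ∘ σ) := by
  have hinj : Injective (realPlace ∘ σ) := realPlace_injective.comp hσ
  have hle := Fintype.card_le_of_injective _ hinj
  have hrank := card_add_two_mul_card_eq_rank F
  have hcard := card_eq_nrRealPlaces_add_nrComplexPlaces F
  refine (Fintype.bijective_iff_injective_and_card _).mpr ⟨hinj, ?_⟩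
  omega

end RealPlaces

section LogEmbedding

variable {F κ ι : Type*} [Field F] [Fintype ι]

noncomputable def realLogEmbedding (σ : κ → (F →+* ℝ)) (x : F) : κ → ℝ :=
  fun k => Real.log |σ k x|

theorem realLogEmbedding_prod_zpow (σ : κ → (F →+* ℝ)) (u : ι → (𝓞 F)ˣ) (n : ι → ℤ) :
    realLogEmbedding σ ((∏ j, u j ^ n j : (𝓞 F)ˣ) : F) =
      ∑ j, (n j : ℝ) • realLogEmbedding σ (u j) := by
  ext k
  have hcoe : ((∏ j, u j ^ n j : (𝓞 F)ˣ) : F) = ∏ j, (u j : F) ^ n j :=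
    map_prod ((Units.coeHom F).comp (Units.map (algebraMap (𝓞 F) F).toMonoidHom)) _ _ |>.trans
      (Finset.prod_congr rfl fun j _ => coe_zpow _ _)
  simp only [realLogEmbedding, Finset.sum_apply, Pi.smul_apply, smul_eq_mul, hcoe, map_prod,
    map_zpow₀, Finset.abs_prod, abs_zpow]
  rw [Real.log_prod fun j _ =>
    zpow_ne_zero _ (abs_ne_zero.mpr ((map_ne_zero (σ k)).mpr (coe_ne_zero _)))]
  simp only [Real.log_zpow]

variable [NumberField F] {σ : κ → (F →+* ℝ)}

theorem logEmbedding_apply_eq_realLogEmbedding (hσ : Bijective (realPlace ∘ σ)) (x : (𝓞 F)ˣ)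
    (w : {w : InfinitePlace F // w ≠ w₀}) :
    logEmbedding F (Additive.ofMul x) w =
      realLogEmbedding σ x ((Equiv.ofBijective _ hσ).symm w) := by
  have hw : realPlace (σ ((Equiv.ofBijective _ hσ).symm w)) = w :=
    (Equiv.ofBijective _ hσ).apply_symm_apply w
  rw [logEmbedding_component, realLogEmbedding, ← realPlace_apply, hw,
    (hw ▸ isReal_realPlace _ : IsReal w.1).mult_eq_one, Nat.cast_one, one_mul]

theorem sum_realLogEmbedding_eq_zero [Fintype κ] (hσ : Bijective (realPlace ∘ σ))
    (x : (𝓞 F)ˣ) : ∑ k, realLogEmbedding σ x k = 0 := by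
  rw [← sum_mult_mul_log x, ← (Equiv.ofBijective _ hσ).sum_comp]
  refine Finset.sum_congr rfl fun k _ => ?_
  simp [realLogEmbedding, realPlace_apply, (isReal_realPlace (σ k)).mult_eq_one]

theorem logEmbedding_prod_zpow (u : ι → (𝓞 F)ˣ) (n : ι → ℤ) :
    logEmbedding F (Additive.ofMul (∏ j, u j ^ n j)) =
      ∑ j, n j • logEmbedding F (Additive.ofMul (u j)) := by
  rw [ofMul_prod, map_sum]
  simp_rw [ofMul_zpow, map_zsmul]

theorem logEmbedding_neg (x : (𝓞 F)ˣ) :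
    logEmbedding F (Additive.ofMul (-x)) = logEmbedding F (Additive.ofMul x) := by
  rw [← neg_one_mul, ofMul_mul, map_add, logEmbedding_eq_zero_iff.mpr neg_one_mem_torsion,
    zero_add]

theorem span_logEmbedding_eq_top (u : ι → (𝓞 F)ˣ)
    (hfund : ∀ w : (𝓞 F)ˣ, ∃ n : ι → ℤ, w = ∏ j, u j ^ n j ∨ w = -∏ j, u j ^ n j) :
    span ℝ (range fun j => logEmbedding F (Additive.ofMul (u j))) = ⊤ := by
  rw [eq_top_iff, ← unitLattice_span_eq_top F, span_le]
  rintro _ ⟨x, -, rfl⟩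
  obtain ⟨n, hn⟩ := hfund x.toMul
  have hx : logEmbedding F x = ∑ j, n j • logEmbedding F (Additive.ofMul (u j)) := by
    rw [← logEmbedding_prod_zpow, ← ofMul_toMul x]
    rcases hn with hn | hn <;> rw [hn]
    exact logEmbedding_neg _
  rw [SetLike.mem_coe, AddMonoidHom.coe_toIntLinearMap, hx]
  exact sum_mem fun j _ => zsmul_mem (subset_span (mem_range_self j)) _

theorem linearIndependent_realLogEmbedding [Fintype κ] (hσ : Bijective (realPlace ∘ σ))
    (u : ι → (𝓞 F)ˣ)
    (hfund : ∀ w : (𝓞 F)ˣ, ∃ n : ι → ℤ, w = ∏ j, u j ^ n j ∨ w = -∏ j, u j ^ n j)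
    (hcard : Fintype.card ι + 1 = Fintype.card κ) :
    LinearIndependent ℝ fun j => realLogEmbedding σ (u j) := by
  have hlog : LinearIndependent ℝ fun j => logEmbedding F (Additive.ofMul (u j)) := by
    refine linearIndependent_of_top_le_span_of_card_eq_finrank
      (span_logEmbedding_eq_top u hfund).ge ?_
    rw [Units.finrank_eq_rank, rank, ← Fintype.card_congr (Equiv.ofBijective _ hσ)]
    omega
  refine LinearIndependent.of_comp
    (LinearMap.funLeft ℝ ℝ fun w : {w : InfinitePlace F // w ≠ w₀} =>
      (Equiv.ofBijective _ hσ).symm w) ?_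
  convert hlog using 1
  ext j w
  exact (logEmbedding_apply_eq_realLogEmbedding hσ (u j) w).symm

end LogEmbedding

theorem stmt14_general (F : Type*) [Field F] [NumberField F] (d : ℕ)
    (σ : Fin d → (F →+* ℝ)) (hdeg : Module.finrank ℚ F = d)
    (hσ : Function.Injective σ)
    (u : Fin (d - 1) → (𝓞 F)ˣ)
    (hfund : ∀ w : (𝓞 F)ˣ, ∃ n : Fin (d - 1) → ℤ,
        w = ∏ j, (u j) ^ (n j) ∨ w = -∏ j, (u j) ^ (n j))
    (δ₀ : ℝ) (hδ₀ : 1 < δ₀) (δ : Fin d → ℝ)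
    (hδ : ∀ k, δ k = δ₀ * Real.sqrt (∏ j,
        max |σ k (algebraMap (𝓞 F) F (u j))| |σ k (algebraMap (𝓞 F) F (u j))|⁻¹)) :
    ∀ t : Fin d → ℝ, |∑ k, t k| < Real.log δ₀ →
      ∃ w : (𝓞 F)ˣ, ∀ k,
        |Real.log |σ k (algebraMap (𝓞 F) F w)| - t k| ≤ Real.log (δ k) := by
  intro t ht
  have hd : 0 < d := hdeg ▸ Module.finrank_pos
  have hplaces := bijective_realPlace_comp hσ (hdeg.trans (Fintype.card_fin d).symm)
  have hcard : Fintype.card (Fin (d - 1)) + 1 = Fintype.card (Fin d) := by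
    simp only [Fintype.card_fin]
    omega
  obtain ⟨n, hn⟩ := exists_int_combination_near_of_sum_eq_zero
    (linearIndependent_realLogEmbedding hplaces u hfund hcard)
    (fun j => sum_realLogEmbedding_eq_zero hplaces (u j)) hcard t
  refine ⟨∏ j, u j ^ n j, fun k => ?_⟩
  have hσu : ∀ j, 0 < |σ k (u j : F)| := fun j =>
    abs_pos.mpr ((map_ne_zero (σ k)).mpr (coe_ne_zero _))
  have hmean : |∑ k, t k| / d ≤ Real.log δ₀ :=
    (div_le_self (abs_nonneg _) (by exact_mod_cast hd)).trans ht.le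
  calc |realLogEmbedding σ ((∏ j, u j ^ n j : (𝓞 F)ˣ) : F) k - t k|
      = |∑ j, (n j : ℝ) * realLogEmbedding σ (u j) k - t k| := by
        simp only [realLogEmbedding_prod_zpow, Finset.sum_apply, Pi.smul_apply, smul_eq_mul]
    _ ≤ (∑ j, |realLogEmbedding σ (u j) k|) / 2 + Real.log δ₀ :=
        (hn k).trans (add_le_add le_rfl (by rwa [Fintype.card_fin]))
    _ = Real.log (δ k) := by
        rw [hδ k, Real.log_mul_sqrt_prod_max_inv (by linarith) hσu]
        exact add_comm _ _

/-- let `F` be a totally real number field of degree `d` with real embeddings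
`σ₁,…,σ_d` and fundamental units `u₁,…,u_{d−1}` of `O_F` (generating the unit group up to
sign).  Fix `δ₀ > 1` and set
`δ_k = δ₀·√(∏_j max(|σ_k(u_j)|, |σ_k(u_j)|⁻¹))`.  Then for every `t ∈ ℝ^d` with
`|∑_k t_k| < log δ₀` there is a unit `u` with `|log|σ_k(u)| − t_k| ≤ log δ_k` for all `k`. -/
theorem stmt14 (F : Type*) [Field F] [NumberField F] (d : ℕ) (hd : 0 < d)
    (σ : Fin d → (F →+* ℝ)) (hdeg : Module.finrank ℚ F = d)
    (hσ : Function.Injective σ)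
    (u : Fin (d - 1) → (𝓞 F)ˣ)
    (hfund : ∀ w : (𝓞 F)ˣ, ∃ n : Fin (d - 1) → ℤ,
        w = ∏ j, (u j) ^ (n j) ∨ w = -∏ j, (u j) ^ (n j))
    (δ₀ : ℝ) (hδ₀ : 1 < δ₀) (δ : Fin d → ℝ)
    (hδ : ∀ k, δ k = δ₀ * Real.sqrt (∏ j,
        max |σ k (algebraMap (𝓞 F) F (u j))| |σ k (algebraMap (𝓞 F) F (u j))|⁻¹)) :
    ∀ t : Fin d → ℝ, |∑ k, t k| < Real.log δ₀ →
      ∃ w : (𝓞 F)ˣ, ∀ k,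
        |Real.log |σ k (algebraMap (𝓞 F) F w)| - t k| ≤ Real.log (δ k) :=
  stmt14_general F d σ hdeg hσ u hfund δ₀ hδ₀ δ hδ
end
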